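/- arXiv:1803.09931 — 5 statements merged into one kernel-verified Lean document; each statement's English description precedes it below -/
import Mathlib

section
/- Let n ≥ 1, N ≥ 1, let r : ℂ×ℂ → M_{n²}(ℂ) satisfy the classical Yang–Baxter equation (for all λ,μ,ν), let τ : ℂ → ℂ, g^{(0)},…,g^{(N−1)} : ℂ → ℂ with g^{(0)} ≡ 1, and let k : ℂ → GL_n(ℂ) satisfy the N-reflection equation for all λ,ν. Define r̄_{ab}(λ,ν) = ∑_{j=0}^{N−1} g^{(j)}(ν)·k^{(j)}_b(ν)·r_{ab}(λ, τ^j(ν))·(k^{(j)}_b(ν))^{−1}. Then r̄ satisfies the classical Yang–Baxter equation: [r̄_{ab}(λ,μ), r̄_{ac}(λ,ν)] + [r̄_{ab}(λ,μ), r̄_{bc}(μ,ν)] − [r̄_{ac}(λ,ν), r̄_{cb}(ν,μ)] = 0 for all λ,μ,ν. -/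
open Matrix Kronecker

noncomputable section

/-- `x_a = x ⊗ 1`, acting on `ℂ^n ⊗ ℂ^n`. -/
def legA (n : ℕ) (x : Matrix (Fin n) (Fin n) ℂ) :
    Matrix (Fin n × Fin n) (Fin n × Fin n) ℂ :=
  x ⊗ₖ (1 : Matrix (Fin n) (Fin n) ℂ)

/-- `x_b = 1 ⊗ x`, acting on `ℂ^n ⊗ ℂ^n`. -/
def legB (n : ℕ) (x : Matrix (Fin n) (Fin n) ℂ) :
    Matrix (Fin n × Fin n) (Fin n × Fin n) ℂ :=
  (1 : Matrix (Fin n) (Fin n) ℂ) ⊗ₖ x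

/-- `k⁽ʲ⁾(ν) = k⁽ʲ⁻¹⁾(ν) · k(τʲ⁻¹(ν))`, with `k⁽⁰⁾ = 1`. -/
def kiter {n : ℕ} (k : ℂ → Matrix (Fin n) (Fin n) ℂ) (τ : ℂ → ℂ) :
    ℕ → ℂ → Matrix (Fin n) (Fin n) ℂ
  | 0, _ => 1
  | j + 1, ν => kiter k τ j ν * k (τ^[j] ν)

/-- `r̄_{ab}(λ,ν) = ∑_{j<N} g⁽ʲ⁾(ν) k⁽ʲ⁾_b(ν) r_{ab}(λ, τʲ(ν)) (k⁽ʲ⁾_b(ν))⁻¹`. -/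
def rbar (n N : ℕ) (r : ℂ → ℂ → Matrix (Fin n × Fin n) (Fin n × Fin n) ℂ)
    (τ : ℂ → ℂ) (g : ℕ → ℂ → ℂ) (k : ℂ → Matrix (Fin n) (Fin n) ℂ)
    (lam ν : ℂ) : Matrix (Fin n × Fin n) (Fin n × Fin n) ℂ :=
  ∑ j ∈ Finset.range N,
    g j ν • (legB n (kiter k τ j ν) * r lam (τ^[j] ν) * (legB n (kiter k τ j ν))⁻¹)

/-- The classical `N`-reflection equation. -/
def NRefl (n N : ℕ) (r : ℂ → ℂ → Matrix (Fin n × Fin n) (Fin n × Fin n) ℂ)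
    (τ : ℂ → ℂ) (g : ℕ → ℂ → ℂ) (k : ℂ → Matrix (Fin n) (Fin n) ℂ) : Prop :=
  ∀ lam ν : ℂ,
    rbar n N r τ g k lam ν * legA n (k lam) = legA n (k lam) * rbar n N r τ g k (τ lam) ν

/-- Embedding of an `n²×n²` matrix into legs `a,b` of `ℂ^n ⊗ ℂ^n ⊗ ℂ^n`. -/
def toAB (n : ℕ) (X : Matrix (Fin n × Fin n) (Fin n × Fin n) ℂ) :
    Matrix (Fin n × Fin n × Fin n) (Fin n × Fin n × Fin n) ℂ :=
  Matrix.of fun i j => X (i.1, i.2.1) (j.1, j.2.1) * (if i.2.2 = j.2.2 then 1 else 0)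

/-- Embedding into legs `a,c`. -/
def toAC (n : ℕ) (X : Matrix (Fin n × Fin n) (Fin n × Fin n) ℂ) :
    Matrix (Fin n × Fin n × Fin n) (Fin n × Fin n × Fin n) ℂ :=
  Matrix.of fun i j => X (i.1, i.2.2) (j.1, j.2.2) * (if i.2.1 = j.2.1 then 1 else 0)

/-- Embedding into legs `b,c`. -/
def toBC (n : ℕ) (X : Matrix (Fin n × Fin n) (Fin n × Fin n) ℂ) :
    Matrix (Fin n × Fin n × Fin n) (Fin n × Fin n × Fin n) ℂ :=
  Matrix.of fun i j => (if i.1 = j.1 then 1 else 0) * X (i.2.1, i.2.2) (j.2.1, j.2.2)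

/-- Embedding into legs `c,b` (the leg-swap of `toBC`). -/
def toCB (n : ℕ) (X : Matrix (Fin n × Fin n) (Fin n × Fin n) ℂ) :
    Matrix (Fin n × Fin n × Fin n) (Fin n × Fin n × Fin n) ℂ :=
  Matrix.of fun i j => (if i.1 = j.1 then 1 else 0) * X (i.2.2, i.2.1) (j.2.2, j.2.1)

/-- The classical Yang-Baxter equation
`[X_{ab}(λ,μ), X_{ac}(λ,ν)] + [X_{ab}(λ,μ), X_{bc}(μ,ν)] - [X_{ac}(λ,ν), X_{cb}(ν,μ)] = 0`. -/
def CYBE (n : ℕ) (X : ℂ → ℂ → Matrix (Fin n × Fin n) (Fin n × Fin n) ℂ) : Prop :=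
  ∀ lam mu ν : ℂ,
    (toAB n (X lam mu) * toAC n (X lam ν) - toAC n (X lam ν) * toAB n (X lam mu))
      + (toAB n (X lam mu) * toBC n (X mu ν) - toBC n (X mu ν) * toAB n (X lam mu))
      - (toAC n (X lam ν) * toCB n (X ν mu) - toCB n (X ν mu) * toAC n (X lam ν)) = 0

/-! On three legs, `r̄_ab(λ,μ)` and `r̄_ac(λ,ν)` are sums of conjugates of `g⁽ʲ⁾(μ) r_ab(λ,τʲμ)` by
`k⁽ʲ⁾(μ)` on leg `b`, and of `g⁽ᵐ⁾(ν) r_ac(λ,τᵐν)` by `k⁽ᵐ⁾(ν)` on leg `c`. Iterating the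
reflection equation gives `r̄(λ,ν) k⁽ʲ⁾_a(λ) = k⁽ʲ⁾_a(λ) r̄(τʲλ,ν)`, so `r̄_bc(μ,ν)` and
`r̄_cb(ν,μ)` are conjugates of sums of the same shape, for every `j`, resp. every `m`. Operators on
different legs commute, hence the `(j,m)` terms of all three commutators are conjugates by
`k⁽ʲ⁾_b(μ) k⁽ᵐ⁾_c(ν)` of `g⁽ʲ⁾(μ) g⁽ᵐ⁾(ν)` times the classical Yang–Baxter expression of `r` at
`(λ, τʲμ, τᵐν)`, which vanishes. -/

open Finset

namespace Matrix

variable (R m p : Type*) [CommRing R] [Fintype m] [DecidableEq m] [Fintype p] [DecidableEq p]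

def kroneckerOneRight : Matrix m m R →ₐ[R] Matrix (m × p) (m × p) R :=
  (kroneckerAlgEquiv m p R).toAlgHom.comp Algebra.TensorProduct.includeLeft

def kroneckerOneLeft : Matrix p p R →ₐ[R] Matrix (m × p) (m × p) R :=
  (kroneckerAlgEquiv m p R).toAlgHom.comp Algebra.TensorProduct.includeRight

variable {R m p}

@[simp]
lemma kroneckerOneRight_apply (A : Matrix m m R) : kroneckerOneRight R m p A = A ⊗ₖ 1 := by
  simp [kroneckerOneRight]

@[simp]
lemma kroneckerOneLeft_apply (B : Matrix p p R) : kroneckerOneLeft R m p B = 1 ⊗ₖ B := by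
  simp [kroneckerOneLeft]

end Matrix

section Conjugation

variable {M : Type*} [Monoid M]

lemma Units.conj_eq_self_of_commute {u : Mˣ} {x : M} (h : Commute (u : M) x) :
    u * x * ↑u⁻¹ = x := by
  rw [h.eq, mul_assoc, Units.mul_inv, mul_one]

lemma Units.conj_mul (u v : Mˣ) (x : M) :
    ↑(u * v) * x * ↑(u * v)⁻¹ = u * (v * x * ↑v⁻¹) * ↑u⁻¹ := by
  simp only [Units.val_mul, _root_.mul_inv_rev, mul_assoc]

lemma map_units_conj {N F : Type*} [Monoid N] [FunLike F M N] [MonoidHomClass F M N] (φ : F)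
    {u : Mˣ} {w : Nˣ} (h : (w : N) = φ u) (x : M) : φ (u * x * ↑u⁻¹) = w * φ x * ↑w⁻¹ := by
  obtain rfl : w = Units.map (φ : M →* N) u := Units.ext h
  simp

end Conjugation

section RingCommutator

-- `⁅x, y⁆ = x * y - y * x`; as a Lie ring instance it makes `sum_lie` and `lie_sum` available.
attribute [local instance] LieRing.ofAssociativeRing

variable {A : Type*} [Ring A]

lemma Units.conj_lie_conj (u : Aˣ) (x y : A) :
    ⁅u * x * ↑u⁻¹, u * y * ↑u⁻¹⁆ = u * ⁅x, y⁆ * ↑u⁻¹ := by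
  simp only [Ring.lie_def, mul_sub, sub_mul, mul_assoc, Units.inv_mul_cancel_left]

lemma Units.conj_sum {ι : Type*} (u : Aˣ) (s : Finset ι) (x : ι → A) :
    u * (∑ i ∈ s, x i) * ↑u⁻¹ = ∑ i ∈ s, u * x i * ↑u⁻¹ := by
  simp only [Finset.mul_sum, Finset.sum_mul]

theorem lie_add_lie_sub_lie_eq_zero_of_conj_sums {ι : Type*} (s : Finset ι)
    (b c : ι → Aˣ) (X Z : ι → A) (Y W : ι → ι → A) {P Q S T : A}
    (hbc : ∀ j m, Commute (b j) (c m))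
    (hbZ : ∀ j m, Commute (b j : A) (Z m)) (hcX : ∀ j m, Commute (c m : A) (X j))
    (hP : P = ∑ j ∈ s, b j * X j * ↑(b j)⁻¹)
    (hQ : Q = ∑ m ∈ s, c m * Z m * ↑(c m)⁻¹)
    (hS : ∀ j, S = b j * (∑ m ∈ s, c m * Y j m * ↑(c m)⁻¹) * ↑(b j)⁻¹)
    (hT : ∀ m, T = c m * (∑ j ∈ s, b j * W m j * ↑(b j)⁻¹) * ↑(c m)⁻¹)
    (hYB : ∀ j m, ⁅X j, Z m⁆ + ⁅X j, Y j m⁆ - ⁅Z m, W m j⁆ = 0) :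
    ⁅P, Q⁆ + ⁅P, S⁆ - ⁅Q, T⁆ = 0 := by
  -- every `(j, m)` term is a conjugate by `b j * c m = c m * b j`
  set d : ι → ι → Aˣ := fun j m => b j * c m
  have hcb : ∀ j m, d j m = c m * b j := fun j m => (hbc j m).eq
  have hX : ∀ j m, b j * X j * ↑(b j)⁻¹ = d j m * X j * ↑(d j m)⁻¹ := fun j m => by
    rw [Units.conj_mul, Units.conj_eq_self_of_commute (hcX j m)]
  have hZ : ∀ j m, c m * Z m * ↑(c m)⁻¹ = d j m * Z m * ↑(d j m)⁻¹ := fun j m => by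
    rw [hcb, Units.conj_mul, Units.conj_eq_self_of_commute (hbZ j m)]
  have hPQ : ⁅P, Q⁆ = ∑ j ∈ s, ∑ m ∈ s, d j m * ⁅X j, Z m⁆ * ↑(d j m)⁻¹ := by
    rw [hP, sum_lie]
    refine sum_congr rfl fun j _ => ?_
    rw [hQ, lie_sum]
    refine sum_congr rfl fun m _ => ?_
    rw [hX j m, hZ j m, Units.conj_lie_conj]
  have hPS : ⁅P, S⁆ = ∑ j ∈ s, ∑ m ∈ s, d j m * ⁅X j, Y j m⁆ * ↑(d j m)⁻¹ := by
    rw [hP, sum_lie]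
    refine sum_congr rfl fun j _ => ?_
    rw [hS j, Units.conj_sum, lie_sum]
    refine sum_congr rfl fun m _ => ?_
    rw [hX j m, ← Units.conj_mul, Units.conj_lie_conj]
  have hQT : ⁅Q, T⁆ = ∑ j ∈ s, ∑ m ∈ s, d j m * ⁅Z m, W m j⁆ * ↑(d j m)⁻¹ := by
    rw [hQ, sum_lie, sum_comm]
    refine sum_congr rfl fun m _ => ?_
    rw [hT m, Units.conj_sum, lie_sum]
    refine sum_congr rfl fun j _ => ?_
    rw [hZ j m, ← Units.conj_mul, ← hcb, Units.conj_lie_conj]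
  rw [hPQ, hPS, hQT, ← sum_add_distrib, ← sum_sub_distrib]
  refine sum_eq_zero fun j _ => ?_
  rw [← sum_add_distrib, ← sum_sub_distrib]
  refine sum_eq_zero fun m _ => ?_
  rw [← add_mul, ← sub_mul, ← mul_add, ← mul_sub, hYB, mul_zero, zero_mul]

lemma lie_smul_add_lie_smul_sub_lie_smul_eq_zero {𝕜 : Type*} [CommRing 𝕜] [Algebra 𝕜 A]
    (β γ : 𝕜) {x y z w : A} (h : ⁅x, z⁆ + ⁅x, y⁆ - ⁅z, w⁆ = 0) :
    ⁅β • x, γ • z⁆ + ⁅β • x, γ • y⁆ - ⁅γ • z, β • w⁆ = 0 :=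
  calc ⁅β • x, γ • z⁆ + ⁅β • x, γ • y⁆ - ⁅γ • z, β • w⁆
      = (β * γ) • (⁅x, z⁆ + ⁅x, y⁆ - ⁅z, w⁆) := by
        simp only [Ring.lie_def, smul_mul_smul_comm, smul_add, smul_sub, mul_comm γ β]
    _ = 0 := by rw [h, smul_zero]

end RingCommutator

section Embeddings

variable {n : ℕ}

def toABAlgHom (n : ℕ) :
    Matrix (Fin n × Fin n) (Fin n × Fin n) ℂ →ₐ[ℂ]
      Matrix (Fin n × Fin n × Fin n) (Fin n × Fin n × Fin n) ℂ :=
  (reindexAlgEquiv ℂ ℂ (Equiv.prodAssoc _ _ _)).toAlgHom.comp (kroneckerOneRight ℂ _ _)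

def toACAlgHom (n : ℕ) :
    Matrix (Fin n × Fin n) (Fin n × Fin n) ℂ →ₐ[ℂ]
      Matrix (Fin n × Fin n × Fin n) (Fin n × Fin n × Fin n) ℂ :=
  -- `((a, c), b) ↦ (a, b, c)`
  (reindexAlgEquiv ℂ ℂ ((Equiv.prodAssoc _ _ _).trans
    ((Equiv.refl _).prodCongr (Equiv.prodComm _ _)))).toAlgHom.comp (kroneckerOneRight ℂ _ _)

def toBCAlgHom (n : ℕ) :
    Matrix (Fin n × Fin n) (Fin n × Fin n) ℂ →ₐ[ℂ]
      Matrix (Fin n × Fin n × Fin n) (Fin n × Fin n × Fin n) ℂ :=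
  kroneckerOneLeft ℂ _ _

def toCBAlgHom (n : ℕ) :
    Matrix (Fin n × Fin n) (Fin n × Fin n) ℂ →ₐ[ℂ]
      Matrix (Fin n × Fin n × Fin n) (Fin n × Fin n × Fin n) ℂ :=
  (kroneckerOneLeft ℂ _ _).comp (reindexAlgEquiv ℂ ℂ (Equiv.prodComm _ _)).toAlgHom

@[simp]
lemma toABAlgHom_apply (X : Matrix (Fin n × Fin n) (Fin n × Fin n) ℂ) :
    toABAlgHom n X = toAB n X := by
  ext ⟨i1, i2, i3⟩ ⟨j1, j2, j3⟩
  simp [toABAlgHom, toAB, one_apply]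

@[simp]
lemma toACAlgHom_apply (X : Matrix (Fin n × Fin n) (Fin n × Fin n) ℂ) :
    toACAlgHom n X = toAC n X := by
  ext ⟨i1, i2, i3⟩ ⟨j1, j2, j3⟩
  simp [toACAlgHom, toAC, one_apply]

@[simp]
lemma toBCAlgHom_apply (X : Matrix (Fin n × Fin n) (Fin n × Fin n) ℂ) :
    toBCAlgHom n X = toBC n X := by
  ext ⟨i1, i2, i3⟩ ⟨j1, j2, j3⟩
  simp [toBCAlgHom, toBC, one_apply]

@[simp]
lemma toCBAlgHom_apply (X : Matrix (Fin n × Fin n) (Fin n × Fin n) ℂ) :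
    toCBAlgHom n X = toCB n X := by
  ext ⟨i1, i2, i3⟩ ⟨j1, j2, j3⟩
  simp [toCBAlgHom, toCB, one_apply]

lemma legA_eq_kroneckerOneRight : legA n = kroneckerOneRight ℂ (Fin n) (Fin n) := by
  ext; simp [legA]

lemma legB_eq_kroneckerOneLeft : legB n = kroneckerOneLeft ℂ (Fin n) (Fin n) := by
  ext; simp [legB]

lemma toBC_legA (x : Matrix (Fin n) (Fin n) ℂ) : toBC n (legA n x) = toAB n (legB n x) := by
  ext ⟨i1, i2, i3⟩ ⟨j1, j2, j3⟩
  simp [toBC, toAB, legA, legB, one_apply]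

lemma toCB_legB (x : Matrix (Fin n) (Fin n) ℂ) : toCB n (legB n x) = toAB n (legB n x) := by
  ext ⟨i1, i2, i3⟩ ⟨j1, j2, j3⟩
  simp [toCB, toAB, legB, one_apply]

lemma toAC_legB (x : Matrix (Fin n) (Fin n) ℂ) : toAC n (legB n x) = toBC n (legB n x) := by
  ext ⟨i1, i2, i3⟩ ⟨j1, j2, j3⟩
  simp [toAC, toBC, legB, one_apply]

lemma toCB_legA (x : Matrix (Fin n) (Fin n) ℂ) : toCB n (legA n x) = toBC n (legB n x) := by
  ext ⟨i1, i2, i3⟩ ⟨j1, j2, j3⟩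
  simp [toCB, toBC, legA, legB, one_apply]

lemma commute_toBC_legB_toAB (z : Matrix (Fin n) (Fin n) ℂ)
    (X : Matrix (Fin n × Fin n) (Fin n × Fin n) ℂ) :
    Commute (toBC n (legB n z)) (toAB n X) := by
  ext ⟨i1, i2, i3⟩ ⟨j1, j2, j3⟩
  simp [mul_apply, Fintype.sum_prod_type, toAB, toBC, legB, one_apply, mul_comm]

lemma commute_toAB_legB_toAC (y : Matrix (Fin n) (Fin n) ℂ)
    (Z : Matrix (Fin n × Fin n) (Fin n × Fin n) ℂ) :
    Commute (toAB n (legB n y)) (toAC n Z) := by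
  ext ⟨i1, i2, i3⟩ ⟨j1, j2, j3⟩
  simp [mul_apply, Fintype.sum_prod_type, toAB, toAC, legB, one_apply, mul_comm]

lemma IsUnit.toAB_legB {x : Matrix (Fin n) (Fin n) ℂ} (hx : IsUnit x) :
    IsUnit (toAB n (legB n x)) := by
  simpa [legB_eq_kroneckerOneLeft] using (hx.map (kroneckerOneLeft ℂ _ _)).map (toABAlgHom n)

lemma IsUnit.toBC_legB {x : Matrix (Fin n) (Fin n) ℂ} (hx : IsUnit x) :
    IsUnit (toBC n (legB n x)) := by
  simpa [legB_eq_kroneckerOneLeft] using (hx.map (kroneckerOneLeft ℂ _ _)).map (toBCAlgHom n)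

end Embeddings

section Reflection

variable {n N : ℕ} {r : ℂ → ℂ → Matrix (Fin n × Fin n) (Fin n × Fin n) ℂ} {τ : ℂ → ℂ}
  {g : ℕ → ℂ → ℂ} {k : ℂ → Matrix (Fin n) (Fin n) ℂ}
  {A : Type*} [Ring A] [Algebra ℂ A]

lemma isUnit_kiter (hk : ∀ ν, IsUnit (k ν)) (j : ℕ) (ν : ℂ) : IsUnit (kiter k τ j ν) := by
  induction j with
  | zero => exact isUnit_one
  | succ j ih => exact ih.mul (hk _)

lemma map_rbar (φ : Matrix (Fin n × Fin n) (Fin n × Fin n) ℂ →ₐ[ℂ] A) (hk : ∀ ν, IsUnit (k ν))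
    {ν : ℂ} {w : ℕ → Aˣ} (hw : ∀ j, (w j : A) = φ (legB n (kiter k τ j ν))) (lam : ℂ) :
    φ (rbar n N r τ g k lam ν)
      = ∑ j ∈ range N, w j * (g j ν • φ (r lam (τ^[j] ν))) * ↑(w j)⁻¹ := by
  rw [rbar, map_sum]
  refine sum_congr rfl fun j _ => ?_
  obtain ⟨u, hu⟩ := (isUnit_kiter hk j ν).map (kroneckerOneLeft ℂ (Fin n) (Fin n))
  have hwu : (w j : A) = φ u := by rw [hw, hu, legB_eq_kroneckerOneLeft]
  rw [legB_eq_kroneckerOneLeft, ← hu, ← coe_units_inv, map_smul, map_units_conj φ hwu,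
    mul_smul_comm, smul_mul_assoc]

lemma NRefl.rbar_mul_legA_kiter (hrefl : NRefl n N r τ g k) (j : ℕ) (lam ν : ℂ) :
    rbar n N r τ g k lam ν * legA n (kiter k τ j lam)
      = legA n (kiter k τ j lam) * rbar n N r τ g k (τ^[j] lam) ν := by
  induction j with
  | zero => simp [kiter, legA_eq_kroneckerOneRight]
  | succ j ih =>
    rw [kiter, legA_eq_kroneckerOneRight, map_mul, ← legA_eq_kroneckerOneRight, ← mul_assoc, ih,
      mul_assoc, hrefl, ← mul_assoc, ← Function.iterate_succ_apply' τ j lam]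

lemma NRefl.map_rbar_eq_conj_sum (hrefl : NRefl n N r τ g k) (hk : ∀ ν, IsUnit (k ν))
    (φ : Matrix (Fin n × Fin n) (Fin n × Fin n) ℂ →ₐ[ℂ] A) (j : ℕ) (lam ν : ℂ) {w : Aˣ}
    {v : ℕ → Aˣ} (hw : (w : A) = φ (legA n (kiter k τ j lam)))
    (hv : ∀ m, (v m : A) = φ (legB n (kiter k τ m ν))) :
    φ (rbar n N r τ g k lam ν)
      = w * (∑ m ∈ range N, v m * (g m ν • φ (r (τ^[j] lam) (τ^[m] ν))) * ↑(v m)⁻¹) * ↑w⁻¹ := by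
  rw [← map_rbar φ hk hv]
  exact (Units.eq_mul_inv_iff_mul_eq w).2
    (by rw [hw, ← map_mul, ← map_mul, hrefl.rbar_mul_legA_kiter])

end Reflection

theorem stmt2_general (n N : ℕ)
    (r : ℂ → ℂ → Matrix (Fin n × Fin n) (Fin n × Fin n) ℂ) (hr : CYBE n r)
    (τ : ℂ → ℂ) (g : ℕ → ℂ → ℂ)
    (k : ℂ → Matrix (Fin n) (Fin n) ℂ) (hk : ∀ ν : ℂ, IsUnit (k ν))
    (hrefl : NRefl n N r τ g k) :
    CYBE n (rbar n N r τ g k) := by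
  intro lam mu ν
  choose b hb using fun j => (isUnit_kiter (τ := τ) hk j mu).toAB_legB
  choose c hc using fun m => (isUnit_kiter (τ := τ) hk m ν).toBC_legB
  have hP := map_rbar (toABAlgHom n) hk (N := N) (r := r) (g := g) (w := b)
    (fun j => by rw [toABAlgHom_apply, hb]) lam
  have hQ := map_rbar (toACAlgHom n) hk (N := N) (r := r) (g := g) (w := c)
    (fun m => by rw [toACAlgHom_apply, toAC_legB, hc]) lam
  have hS := fun j => hrefl.map_rbar_eq_conj_sum hk (toBCAlgHom n) j mu ν (v := c)
    (by rw [toBCAlgHom_apply, toBC_legA, hb]) (fun m => by rw [toBCAlgHom_apply, hc])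
  have hT := fun m => hrefl.map_rbar_eq_conj_sum hk (toCBAlgHom n) m ν mu (v := b)
    (by rw [toCBAlgHom_apply, toCB_legA, hc]) (fun j => by rw [toCBAlgHom_apply, toCB_legB, hb])
  have key := lie_add_lie_sub_lie_eq_zero_of_conj_sums (range N) b c _ _ _ _
    (fun j m => Commute.units_val_iff.1 (by rw [hb, hc]; exact (commute_toBC_legB_toAB _ _).symm))
    (fun j m => by rw [hb, toACAlgHom_apply]; exact (commute_toAB_legB_toAC _ _).smul_right _)
    (fun j m => by rw [hc, toABAlgHom_apply]; exact (commute_toBC_legB_toAB _ _).smul_right _)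
    hP hQ hS hT (fun j m => lie_smul_add_lie_smul_sub_lie_smul_eq_zero _ _
      (by simpa only [Ring.lie_def, toABAlgHom_apply, toACAlgHom_apply, toBCAlgHom_apply,
        toCBAlgHom_apply] using hr lam (τ^[j] mu) (τ^[m] ν)))
  simpa only [Ring.lie_def, toABAlgHom_apply, toACAlgHom_apply, toBCAlgHom_apply,
    toCBAlgHom_apply] using key

/-- If `r` solves the classical Yang-Baxter equation and `k` solves the `N`-reflection
equation, then `r̄` solves the classical Yang-Baxter equation. -/
theorem stmt2 (n N : ℕ) (hn : 1 ≤ n) (hN : 1 ≤ N)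
    (r : ℂ → ℂ → Matrix (Fin n × Fin n) (Fin n × Fin n) ℂ) (hr : CYBE n r)
    (τ : ℂ → ℂ) (g : ℕ → ℂ → ℂ) (hg0 : ∀ ν : ℂ, g 0 ν = 1)
    (k : ℂ → Matrix (Fin n) (Fin n) ℂ) (hk : ∀ ν : ℂ, IsUnit (k ν))
    (hrefl : NRefl n N r τ g k) :
    CYBE n (rbar n N r τ g k) :=
  stmt2_general n N r hr τ g k hk hrefl
end
end

section
/- Let n ≥ 1, N ≥ 1, τ : ℂ → ℂ, and g^{(0)},…,g^{(N−1)} : ℂ → ℂ with g^{(0)} ≡ 1, and let r_{ab}(λ,μ) = P/(λ−μ) be the rational r-matrix. Fix λ,ν ∈ ℂ such that λ ≠ τ^j(ν) and τ(λ) ≠ τ^j(ν) for all j ∈ {0,…,N−1}. Then the identity matrix k(ν) = 1_n satisfies the N-reflection equation at (λ,ν) if and only if the scalar functional equation ∑_{j=0}^{N−1} g^{(j)}(ν)/(λ − τ^j(ν)) = ∑_{j=0}^{N−1} g^{(j)}(ν)/(τ(λ) − τ^j(ν)) holds. -/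
open Matrix

noncomputable section

/-- The swap (permutation) matrix `P : P(u ⊗ v) = v ⊗ u`. -/
def Pmat (n : ℕ) : Matrix (Fin n × Fin n) (Fin n × Fin n) ℂ :=
  Matrix.of fun i j => if i.1 = j.2 ∧ i.2 = j.1 then 1 else 0

theorem Pmat_ne_zero {n : ℕ} (hn : 1 ≤ n) : Pmat n ≠ 0 := by
  intro h
  have := congrFun (congrFun h (⟨0, hn⟩, ⟨0, hn⟩)) (⟨0, hn⟩, ⟨0, hn⟩)
  simp [Pmat] at this

theorem Finset.sum_smul_inv_smul {ι K M : Type*} [Field K] [AddCommMonoid M] [Module K M]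
    (s : Finset ι) (g c : ι → K) (A : M) :
    ∑ j ∈ s, g j • ((c j)⁻¹ • A) = (∑ j ∈ s, g j / c j) • A := by
  simp only [Finset.sum_smul, smul_smul, div_eq_mul_inv]

theorem stmt8_general (n N : ℕ) (hn : 1 ≤ n)
    (τ : ℂ → ℂ) (g : ℕ → ℂ → ℂ)
    (lam ν : ℂ) :
    ((∑ j ∈ Finset.range N, g j ν • ((lam - τ^[j] ν)⁻¹ • Pmat n))
        = ∑ j ∈ Finset.range N, g j ν • ((τ lam - τ^[j] ν)⁻¹ • Pmat n)) ↔
      (∑ j ∈ Finset.range N, g j ν / (lam - τ^[j] ν)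
        = ∑ j ∈ Finset.range N, g j ν / (τ lam - τ^[j] ν)) := by
  rw [Finset.sum_smul_inv_smul, Finset.sum_smul_inv_smul]
  exact (smul_left_injective ℂ (Pmat_ne_zero hn)).eq_iff

/-- For the rational `r`-matrix `r(λ,μ) = P/(λ-μ)` and `k = 1`, the `N`-reflection
equation at `(λ,ν)` is equivalent to the scalar functional equation
`∑_j g⁽ʲ⁾(ν)/(λ - τʲ(ν)) = ∑_j g⁽ʲ⁾(ν)/(τ(λ) - τʲ(ν))`. -/
theorem stmt8 (n N : ℕ) (hn : 1 ≤ n) (hN : 1 ≤ N)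
    (τ : ℂ → ℂ) (g : ℕ → ℂ → ℂ) (hg0 : ∀ ν : ℂ, g 0 ν = 1)
    (lam ν : ℂ)
    (h1 : ∀ j : ℕ, j < N → lam ≠ τ^[j] ν)
    (h2 : ∀ j : ℕ, j < N → τ lam ≠ τ^[j] ν) :
    ((∑ j ∈ Finset.range N, g j ν • ((lam - τ^[j] ν)⁻¹ • Pmat n))
        = ∑ j ∈ Finset.range N, g j ν • ((τ lam - τ^[j] ν)⁻¹ • Pmat n)) ↔
      (∑ j ∈ Finset.range N, g j ν / (lam - τ^[j] ν)
        = ∑ j ∈ Finset.range N, g j ν / (τ lam - τ^[j] ν)) :=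
  stmt8_general n N hn τ g lam ν
end
end

section
/- Let a, b, c ∈ ℂ with a² + bc ≠ 0, define the Möbius map τ(ν) = (aν + b)/(cν − a) and g^{(1)}(ν) = −(a² + bc)/(a − cν)². Then: (i) for every ν with cν ≠ a and cτ(ν) ≠ a, τ(τ(ν)) = ν; and (ii) for all λ, ν ∈ ℂ such that cλ ≠ a, cν ≠ a, λ ≠ ν, λ ≠ τ(ν), τ(λ) ≠ ν and τ(λ) ≠ τ(ν): 1/(λ − ν) + g^{(1)}(ν)/(λ − τ(ν)) = 1/(τ(λ) − ν) + g^{(1)}(ν)/(τ(λ) − τ(ν)). (This is the statement that the identity matrix solves the 2-reflection equation for the rational r-matrix with this τ and g^{(1)}.) -/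
noncomputable section

/-- The Möbius map `τ(ν) = (aν + b)/(cν - a)`. -/
def tauR (a b c ν : ℂ) : ℂ := (a * ν + b) / (c * ν - a)

/-- `g⁽¹⁾(ν) = -(a² + bc)/(a - cν)²`. -/
def g1R (a b c ν : ℂ) : ℂ := -(a ^ 2 + b * c) / (a - c * ν) ^ 2

/-! Write `K = a² + bc`. Everything follows from `(cν - a) τ ν = aν + b`: it gives
`c τ ν - a = K / (cν - a)`, hence `τ ∘ τ = id`, and
`τ λ - τ ν = -K (λ - ν) / ((cλ - a)(cν - a))`. As `g⁽¹⁾ = τ'`, the right-hand side of the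
reflection equation becomes `(cλ - a)/(cν - a) · (1/(λ - ν) - 1/(λ - τ ν))` (use `ν = τ (τ ν)`),
and the identity `K = (cλ - a)(cν - a) - c (cν - a)(λ - τ ν)` splits the left-hand side into
the same fractions. -/

section Mobius

variable {a b c : ℂ}

lemma sub_mul_tauR {ν : ℂ} (hν : c * ν ≠ a) : (c * ν - a) * tauR a b c ν = a * ν + b :=
  mul_div_cancel₀ _ (sub_ne_zero.mpr hν)

lemma c_mul_tauR_sub {ν : ℂ} (hν : c * ν ≠ a) :
    c * tauR a b c ν - a = (a ^ 2 + b * c) / (c * ν - a) := by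
  rw [eq_div_iff (sub_ne_zero.mpr hν)]
  linear_combination c * sub_mul_tauR (b := b) hν

lemma a_mul_tauR_add {ν : ℂ} (hν : c * ν ≠ a) :
    a * tauR a b c ν + b = (a ^ 2 + b * c) * ν / (c * ν - a) := by
  rw [eq_div_iff (sub_ne_zero.mpr hν)]
  linear_combination a * sub_mul_tauR (b := b) hν

lemma c_mul_tauR_ne (habc : a ^ 2 + b * c ≠ 0) {ν : ℂ} (hν : c * ν ≠ a) :
    c * tauR a b c ν ≠ a := by
  rw [← sub_ne_zero, c_mul_tauR_sub hν]
  exact div_ne_zero habc (sub_ne_zero.mpr hν)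

lemma tauR_tauR (habc : a ^ 2 + b * c ≠ 0) {ν : ℂ} (hν : c * ν ≠ a) :
    tauR a b c (tauR a b c ν) = ν := by
  have hν' : c * ν - a ≠ 0 := sub_ne_zero.mpr hν
  rw [tauR, a_mul_tauR_add hν, c_mul_tauR_sub hν]
  field_simp

lemma tauR_sub_tauR {lam ν : ℂ} (hlam : c * lam ≠ a) (hν : c * ν ≠ a) :
    tauR a b c lam - tauR a b c ν
      = -(a ^ 2 + b * c) * (lam - ν) / ((c * lam - a) * (c * ν - a)) := by
  rw [tauR, tauR, div_sub_div _ _ (sub_ne_zero.mpr hlam) (sub_ne_zero.mpr hν)]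
  ring

lemma sq_add_mul_eq_sub_mul_sub_tauR {ν : ℂ} (lam : ℂ) (hν : c * ν ≠ a) :
    a ^ 2 + b * c = (c * lam - a) * (c * ν - a) - c * (c * ν - a) * (lam - tauR a b c ν) := by
  linear_combination (-c) * sub_mul_tauR (b := b) hν

lemma g1R_eq (ν : ℂ) : g1R a b c ν = -(a ^ 2 + b * c) / (c * ν - a) ^ 2 := by
  rw [g1R, ← neg_sub, neg_sq]

lemma g1R_div_sub_tauR {lam ν : ℂ} (hν : c * ν ≠ a) (hlam : lam ≠ tauR a b c ν) :
    g1R a b c ν / (lam - tauR a b c ν)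
      = c / (c * ν - a) - (c * lam - a) / ((c * ν - a) * (lam - tauR a b c ν)) := by
  have hν' : c * ν - a ≠ 0 := sub_ne_zero.mpr hν
  have hlam' : lam - tauR a b c ν ≠ 0 := sub_ne_zero.mpr hlam
  rw [g1R_eq, sq_add_mul_eq_sub_mul_sub_tauR lam hν]
  field_simp
  ring

lemma one_div_tauR_sub (habc : a ^ 2 + b * c ≠ 0) {lam ν : ℂ} (hlam : c * lam ≠ a)
    (hν : c * ν ≠ a) :
    1 / (tauR a b c lam - ν) = -(c * lam - a) / ((c * ν - a) * (lam - tauR a b c ν)) := by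
  have hν' : c * ν - a ≠ 0 := sub_ne_zero.mpr hν
  conv_lhs => rw [← tauR_tauR habc hν, tauR_sub_tauR hlam (c_mul_tauR_ne habc hν),
    c_mul_tauR_sub hν]
  field_simp

lemma g1R_div_tauR_sub_tauR (habc : a ^ 2 + b * c ≠ 0) {lam ν : ℂ} (hlam : c * lam ≠ a)
    (hν : c * ν ≠ a) :
    g1R a b c ν / (tauR a b c lam - tauR a b c ν) = (c * lam - a) / ((c * ν - a) * (lam - ν)) := by
  have hν' : c * ν - a ≠ 0 := sub_ne_zero.mpr hν
  rw [g1R_eq, tauR_sub_tauR hlam hν, div_div_eq_mul_div]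
  field_simp

lemma one_div_sub_add_div {lam ν : ℂ} (hν : c * ν ≠ a) (hlam : lam ≠ ν) :
    1 / (lam - ν) + c / (c * ν - a) = (c * lam - a) / ((c * ν - a) * (lam - ν)) := by
  have hν' : c * ν - a ≠ 0 := sub_ne_zero.mpr hν
  have hlam' : lam - ν ≠ 0 := sub_ne_zero.mpr hlam
  rw [div_add_div _ _ hlam' hν', div_eq_div_iff (mul_ne_zero hlam' hν') (mul_ne_zero hν' hlam')]
  ring

end Mobius

/-- The identity matrix solves the 2-reflection equation for the rational `r`-matrix
with `τ(ν) = (aν+b)/(cν-a)` and `g⁽¹⁾(ν) = -(a²+bc)/(a-cν)²`: `τ` is an involution and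
the scalar functional equation holds. -/
theorem stmt9 (a b c : ℂ) (habc : a ^ 2 + b * c ≠ 0) :
    (∀ ν : ℂ, c * ν ≠ a → c * tauR a b c ν ≠ a → tauR a b c (tauR a b c ν) = ν) ∧
    (∀ lam ν : ℂ, c * lam ≠ a → c * ν ≠ a → lam ≠ ν → lam ≠ tauR a b c ν →
      tauR a b c lam ≠ ν → tauR a b c lam ≠ tauR a b c ν →
      1 / (lam - ν) + g1R a b c ν / (lam - tauR a b c ν)
        = 1 / (tauR a b c lam - ν) + g1R a b c ν / (tauR a b c lam - tauR a b c ν)) := by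
  refine ⟨fun ν hν _ => tauR_tauR habc hν, ?_⟩
  intro lam ν hlam hν hlν hlτ _ _
  rw [g1R_div_sub_tauR hν hlτ, one_div_tauR_sub habc hlam hν, g1R_div_tauR_sub_tauR habc hlam hν,
    ← one_div_sub_add_div hν hlν, neg_div]
  ring
end
end

section
/- Let a, b, c, d ∈ ℂ satisfy a² + ad + bc + d² = 0 and ad − bc ≠ 0. Define τ(ν) = (aν + b)/(cν + d), g^{(1)}(ν) = (ad − bc)/(d + cν)² and g^{(2)}(ν) = (ad − bc)/(a − cν)². Then: (i) τ³(ν) = ν wherever defined (in particular τ²(ν) = (dν − b)/(−cν + a)); and (ii) for all λ, ν at which all the following denominators are nonzero: 1/(λ − ν) + g^{(1)}(ν)/(λ − τ(ν)) + g^{(2)}(ν)/(λ − τ²(ν)) = 1/(τ(λ) − ν) + g^{(1)}(ν)/(τ(λ) − τ(ν)) + g^{(2)}(ν)/(τ(λ) − τ²(ν)). (This is the statement that the identity matrix solves the 3-reflection equation for the rational r-matrix with this τ and these g^{(j)}.) -/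
/-!
Write `D = ad - bc`. The constraint says `(a + d)² = D`, i.e. trace² = determinant for the matrix
of `τ`, which makes `τ³` the identity and `τ² = τ⁻¹`. The weights are derivatives,
`g⁽¹⁾ = τ'` and `g⁽²⁾ = (τ⁻¹)'`, so the chain rule gives `g⁽ʲ⁾(ν) τ'(τʲν) = g⁽ʲ⁺¹⁾(ν)` with indices
mod 3. For a Möbius map `τ'(μ)/(τλ - τμ) = 1/(λ - μ) + c/(cμ + d)`; hence the `j+1`-st term on the
right equals the `j`-th term on the left plus `c g⁽ʲ⁾(ν)/(cτʲν + d)`, and these corrections sum to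
zero because `(a + d)² = D`.
-/

noncomputable section

/-- The Möbius map `τ(ν) = (aν + b)/(cν + d)`. -/
def tauM (a b c d ν : ℂ) : ℂ := (a * ν + b) / (c * ν + d)

/-- `g⁽¹⁾(ν) = (ad - bc)/(d + cν)²`. -/
def g1M (a b c d ν : ℂ) : ℂ := (a * d - b * c) / (d + c * ν) ^ 2

/-- `g⁽²⁾(ν) = (ad - bc)/(a - cν)²`. -/
def g2M (a b c d ν : ℂ) : ℂ := (a * d - b * c) / (a - c * ν) ^ 2

def tauInv (a b c d ν : ℂ) : ℂ := (d * ν - b) / (a - c * ν)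

section Mobius

variable {a b c d : ℂ}

theorem tauM_sub_tauM {lam μ : ℂ} (hlam : c * lam + d ≠ 0) (hμ : c * μ + d ≠ 0) :
    tauM a b c d lam - tauM a b c d μ
      = (a * d - b * c) * (lam - μ) / ((c * lam + d) * (c * μ + d)) := by
  rw [tauM, tauM, div_sub_div _ _ hlam hμ]
  congr 1
  ring

theorem g1M_div_tauM_sub_tauM {lam μ : ℂ} (hlam : c * lam + d ≠ 0) (hμ : c * μ + d ≠ 0)
    (hdet : a * d - b * c ≠ 0) (hne : lam ≠ μ) :
    g1M a b c d μ / (tauM a b c d lam - tauM a b c d μ) = 1 / (lam - μ) + c / (c * μ + d) := by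
  have hsub : lam - μ ≠ 0 := sub_ne_zero.mpr hne
  have hμ' : d + c * μ ≠ 0 := by rwa [add_comm]
  rw [tauM_sub_tauM hlam hμ, g1M]
  field_simp
  ring

theorem c_mul_tauInv_add (ν : ℂ) (hac : a - c * ν ≠ 0) :
    c * tauInv a b c d ν + d = (a * d - b * c) / (a - c * ν) := by
  rw [tauInv]
  field_simp
  ring

theorem tauM_tauInv {ν : ℂ} (hac : a - c * ν ≠ 0) (hdet : a * d - b * c ≠ 0) :
    tauM a b c d (tauInv a b c d ν) = ν := by
  rw [tauM, c_mul_tauInv_add ν hac, div_eq_iff (div_ne_zero hdet hac), tauInv, mul_div_assoc',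
    mul_div_assoc', div_add' _ _ _ hac, div_left_inj' hac]
  ring

theorem g2M_mul_g1M_tauInv {ν : ℂ} (hac : a - c * ν ≠ 0) (hdet : a * d - b * c ≠ 0) :
    g2M a b c d ν * g1M a b c d (tauInv a b c d ν) = 1 := by
  rw [g2M, g1M, add_comm d, c_mul_tauInv_add ν hac]
  field_simp

end Mobius

section TraceSqEqDet

variable {a b c d : ℂ} (hconstr : a ^ 2 + a * d + b * c + d ^ 2 = 0)
include hconstr

theorem add_sq_eq_det : (a + d) ^ 2 = a * d - b * c := by
  linear_combination hconstr

theorem c_mul_tauM_add {ν : ℂ} (hν : c * ν + d ≠ 0) :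
    c * tauM a b c d ν + d = -((a + d) * (a - c * ν)) / (c * ν + d) := by
  rw [tauM, mul_div_assoc', div_add' _ _ _ hν, div_left_inj' hν]
  linear_combination hconstr

theorem a_mul_tauM_add {ν : ℂ} (hν : c * ν + d ≠ 0) :
    a * tauM a b c d ν + b = -((a + d) * (d * ν - b)) / (c * ν + d) := by
  rw [tauM, mul_div_assoc', div_add' _ _ _ hν, div_left_inj' hν]
  linear_combination ν * hconstr

theorem ne_zero_of_c_mul_tauM_add_ne_zero {ν : ℂ} (hν : c * ν + d ≠ 0)
    (hτν : c * tauM a b c d ν + d ≠ 0) : a + d ≠ 0 ∧ a - c * ν ≠ 0 := by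
  rw [c_mul_tauM_add hconstr hν] at hτν
  simp only [ne_eq, div_eq_zero_iff, neg_eq_zero, mul_eq_zero, not_or] at hτν
  exact hτν.1

theorem tauM_tauM_eq_tauInv {ν : ℂ} (hν : c * ν + d ≠ 0) (hτν : c * tauM a b c d ν + d ≠ 0) :
    tauM a b c d (tauM a b c d ν) = tauInv a b c d ν := by
  obtain ⟨hs, hac⟩ := ne_zero_of_c_mul_tauM_add_ne_zero hconstr hν hτν
  rw [tauM, a_mul_tauM_add hconstr hν, c_mul_tauM_add hconstr hν,
    div_div_div_cancel_right₀ hν, neg_div_neg_eq, mul_div_mul_left _ _ hs, tauInv]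

theorem tauM_tauM_tauM {ν : ℂ} (hdet : a * d - b * c ≠ 0) (hν : c * ν + d ≠ 0)
    (hτν : c * tauM a b c d ν + d ≠ 0) : tauM a b c d (tauM a b c d (tauM a b c d ν)) = ν := by
  obtain ⟨-, hac⟩ := ne_zero_of_c_mul_tauM_add_ne_zero hconstr hν hτν
  rw [tauM_tauM_eq_tauInv hconstr hν hτν, tauM_tauInv hac hdet]

theorem g1M_mul_g1M_tauM {ν : ℂ} (hν : c * ν + d ≠ 0) (hτν : c * tauM a b c d ν + d ≠ 0) :
    g1M a b c d ν * g1M a b c d (tauM a b c d ν) = g2M a b c d ν := by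
  obtain ⟨hs, hac⟩ := ne_zero_of_c_mul_tauM_add_ne_zero hconstr hν hτν
  rw [g1M, g1M, g2M, add_comm d, add_comm d, c_mul_tauM_add hconstr hν,
    ← add_sq_eq_det hconstr]
  field_simp

theorem sum_orbit_c_div_eq_zero {ν : ℂ} (hν : c * ν + d ≠ 0)
    (hτν : c * tauM a b c d ν + d ≠ 0) :
    1 / (c * ν + d) + g1M a b c d ν / (c * tauM a b c d ν + d)
      + g2M a b c d ν / (c * tauM a b c d (tauM a b c d ν) + d) = 0 := by
  obtain ⟨hs, hac⟩ := ne_zero_of_c_mul_tauM_add_ne_zero hconstr hν hτν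
  rw [tauM_tauM_eq_tauInv hconstr hν hτν, c_mul_tauInv_add ν hac, c_mul_tauM_add hconstr hν,
    g1M, g2M, add_comm d, ← add_sq_eq_det hconstr]
  field_simp
  ring

end TraceSqEqDet

/-- The identity matrix solves the 3-reflection equation for the rational `r`-matrix
with `τ(ν) = (aν+b)/(cν+d)` subject to `a² + ad + bc + d² = 0`: `τ` has order 3
(with `τ²(ν) = (dν-b)/(-cν+a)`) and the scalar functional equation holds. -/
theorem stmt10 (a b c d : ℂ) (hconstr : a ^ 2 + a * d + b * c + d ^ 2 = 0)
    (hdet : a * d - b * c ≠ 0) :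
    (∀ ν : ℂ, c * ν + d ≠ 0 → c * tauM a b c d ν + d ≠ 0 → a - c * ν ≠ 0 →
      tauM a b c d (tauM a b c d ν) = (d * ν - b) / (-c * ν + a) ∧
      (c * tauM a b c d (tauM a b c d ν) + d ≠ 0 →
        tauM a b c d (tauM a b c d (tauM a b c d ν)) = ν)) ∧
    (∀ lam ν : ℂ, c * ν + d ≠ 0 → c * lam + d ≠ 0 → c * tauM a b c d ν + d ≠ 0 →
      a - c * ν ≠ 0 →
      lam ≠ ν → lam ≠ tauM a b c d ν → lam ≠ tauM a b c d (tauM a b c d ν) →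
      tauM a b c d lam ≠ ν → tauM a b c d lam ≠ tauM a b c d ν →
      tauM a b c d lam ≠ tauM a b c d (tauM a b c d ν) →
      1 / (lam - ν) + g1M a b c d ν / (lam - tauM a b c d ν)
          + g2M a b c d ν / (lam - tauM a b c d (tauM a b c d ν))
        = 1 / (tauM a b c d lam - ν) + g1M a b c d ν / (tauM a b c d lam - tauM a b c d ν)
          + g2M a b c d ν / (tauM a b c d lam - tauM a b c d (tauM a b c d ν))) := by
  refine ⟨fun ν hν hτν _ => ⟨?_, fun _ => tauM_tauM_tauM hconstr hdet hν hτν⟩, ?_⟩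
  · rw [tauM_tauM_eq_tauInv hconstr hν hτν, tauInv, neg_mul, neg_add_eq_sub]
  intro lam ν hν hlam hτν hac hne₀ hne₁ hne₂ _ _ _
  have hτ₂ := tauM_tauM_eq_tauInv hconstr hν hτν
  have hμ₂ : c * tauM a b c d (tauM a b c d ν) + d ≠ 0 := by
    rw [hτ₂, c_mul_tauInv_add ν hac]
    exact div_ne_zero hdet hac
  have hweight : g2M a b c d ν * g1M a b c d (tauM a b c d (tauM a b c d ν)) = 1 := by
    rw [hτ₂]
    exact g2M_mul_g1M_tauInv hac hdet
  set μ₁ := tauM a b c d ν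
  set μ₂ := tauM a b c d μ₁
  have e₀ : 1 / (tauM a b c d lam - ν) = g2M a b c d ν * (1 / (lam - μ₂) + c / (c * μ₂ + d)) := by
    rw [← g1M_div_tauM_sub_tauM hlam hμ₂ hdet hne₂, mul_div_assoc', hweight,
      tauM_tauM_tauM hconstr hdet hν hτν]
  have e₁ : g1M a b c d ν / (tauM a b c d lam - μ₁) = 1 / (lam - ν) + c / (c * ν + d) :=
    g1M_div_tauM_sub_tauM hlam hν hdet hne₀
  have e₂ : g2M a b c d ν / (tauM a b c d lam - μ₂)
      = g1M a b c d ν * (1 / (lam - μ₁) + c / (c * μ₁ + d)) := by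
    rw [← g1M_div_tauM_sub_tauM hlam hτν hdet hne₁, mul_div_assoc',
      g1M_mul_g1M_tauM hconstr hν hτν]
  rw [e₀, e₁, e₂]
  linear_combination (-c) * sum_orbit_c_div_eq_zero hconstr hν hτν
end
end

section
/- Let a, b, c ∈ ℂ with c ≠ 0 and a² + bc ≠ 0, and define p(μ) = (b + cμ²)/(2c(a − cμ)). Then for all λ, μ ∈ ℂ such that λ ≠ μ, a − cλ ≠ 0, a − cμ ≠ 0, b + a(λ + μ) − cλμ ≠ 0 and p(λ) ≠ p(μ): 1/(λ − μ) − (a² + bc)/((a − cμ)(b + a(λ + μ) − cλμ)) = ((b + 2aμ − cμ²)/(2(a − cμ)²)) · (1/(p(λ) − p(μ))). (This expresses the non-skew-symmetric r-matrix r̄(λ,μ) = P·[1/(λ−μ) − (a²+bc)/((a−cμ)(b+a(λ+μ)−cλμ))], obtained from the 2-reflection equation solution with k = 1, as a rescaling and reparametrization of the rational r-matrix r(x) = P/x.) -/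
/- Both sides are rational functions of `λ, μ`. The difference `p(λ) - p(μ)` factors as
`(λ - μ)(b + a(λ + μ) - cλμ) / (2(a - cλ)(a - cμ))`, and on the left the numerator over the
common denominator factors as `(a - cλ)(b + 2aμ - cμ²)`; the two sides then agree term by term. -/

noncomputable section

/-- The reparametrization `p(μ) = (b + cμ²)/(2c(a - cμ))`. -/
def pRep (a b c mu : ℂ) : ℂ := (b + c * mu ^ 2) / (2 * c * (a - c * mu))

theorem pRep_sub_pRep {a b c lam mu : ℂ} (hc : c ≠ 0) (hlam : a - c * lam ≠ 0)
    (hmu : a - c * mu ≠ 0) :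
    pRep a b c lam - pRep a b c mu
      = (lam - mu) * (b + a * (lam + mu) - c * lam * mu) / (2 * (a - c * lam) * (a - c * mu)) := by
  unfold pRep
  field_simp
  ring

theorem one_div_sub_sub_div_eq {K : Type*} [Field K] {a b c lam mu : K} (h : lam ≠ mu)
    (hmu : a - c * mu ≠ 0) (hD : b + a * (lam + mu) - c * lam * mu ≠ 0) :
    1 / (lam - mu) - (a ^ 2 + b * c) / ((a - c * mu) * (b + a * (lam + mu) - c * lam * mu))
      = (a - c * lam) * (b + 2 * a * mu - c * mu ^ 2)
          / ((lam - mu) * (a - c * mu) * (b + a * (lam + mu) - c * lam * mu)) := by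
  have hsub : lam - mu ≠ 0 := sub_ne_zero.mpr h
  rw [div_sub_div _ _ hsub (mul_ne_zero hmu hD)]
  congr 1 <;> ring

theorem stmt18_general (a b c : ℂ) (hc : c ≠ 0)
    (lam mu : ℂ) (h1 : lam ≠ mu) (h2 : a - c * lam ≠ 0) (h3 : a - c * mu ≠ 0)
    (h4 : b + a * (lam + mu) - c * lam * mu ≠ 0) :
    1 / (lam - mu) - (a ^ 2 + b * c) / ((a - c * mu) * (b + a * (lam + mu) - c * lam * mu))
      = ((b + 2 * a * mu - c * mu ^ 2) / (2 * (a - c * mu) ^ 2))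
          * (1 / (pRep a b c lam - pRep a b c mu)) := by
  rw [one_div_sub_sub_div_eq h1 h3 h4, pRep_sub_pRep hc h2 h3, one_div_div]
  field_simp

/-- The non-skew-symmetric `r`-matrix obtained from the 2-reflection equation with
`k = 1` is a rescaling and reparametrization of the rational `r`-matrix: the scalar
identity `1/(λ-μ) - (a²+bc)/((a-cμ)(b+a(λ+μ)-cλμ))
  = ((b+2aμ-cμ²)/(2(a-cμ)²)) · 1/(p(λ)-p(μ))`. -/
theorem stmt18 (a b c : ℂ) (hc : c ≠ 0) (habc : a ^ 2 + b * c ≠ 0)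
    (lam mu : ℂ) (h1 : lam ≠ mu) (h2 : a - c * lam ≠ 0) (h3 : a - c * mu ≠ 0)
    (h4 : b + a * (lam + mu) - c * lam * mu ≠ 0)
    (h5 : pRep a b c lam ≠ pRep a b c mu) :
    1 / (lam - mu) - (a ^ 2 + b * c) / ((a - c * mu) * (b + a * (lam + mu) - c * lam * mu))
      = ((b + 2 * a * mu - c * mu ^ 2) / (2 * (a - c * mu) ^ 2))
          * (1 / (pRep a b c lam - pRep a b c mu)) :=
  stmt18_general a b c hc lam mu h1 h2 h3 h4
end
end
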